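/- arXiv:2401.00982 — 2 statements merged into one kernel-verified Lean document; each statement's English description precedes it below -/
import Mathlib

section
/- If there exists at least one integer M ≡ r (mod t) with p(M) odd, and the set {M ≡ r (mod t) : p(M) odd} is finite, then one may derive a contradiction; i.e., if the set of M ≡ r (mod t) with p(M) odd is nonempty then it is infinite — verify the special case t = 1: the set {n : p(n) odd} is infinite. -/
/-!
The generating function `∑ p(n) Xⁿ` is the inverse of `∏ (1 - Xⁿ⁺¹)`, which by Euler's pentagonal
number theorem has coefficients `±1` at the pentagonal numbers and `0` elsewhere. Consecutive
pentagonal numbers `k(3k+1)/2 < (k+1)(3k+2)/2` leave gaps of unbounded length. If, over `ZMod 2`,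
the first series were a polynomial of degree `M`, then for a pentagonal `g` followed by a gap
longer than `M` the coefficient of `X^(g+M)` in the product would be `1` rather than `0`.
-/

def partitionFn (n : ℕ) : ℕ := Fintype.card (Nat.Partition n)

open PowerSeries PowerSeries.WithPiTopology

theorem PowerSeries.setOf_coeff_ne_zero_infinite_of_mul_eq_one {R : Type*} [Semiring R]
    [NoZeroDivisors R] {f g : R⟦X⟧} (hfg : f * g = 1)
    (hgap : ∀ M, ∃ n, 0 < n ∧ g.coeff n ≠ 0 ∧ ∀ k ∈ Set.Ioc n (n + M), g.coeff k = 0) :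
    {n | f.coeff n ≠ 0}.Infinite := by
  intro hfin
  have hconst : f.coeff 0 * g.coeff 0 = 1 := by
    simpa [coeff_zero_eq_constantCoeff_apply] using congr_arg constantCoeff hfg
  obtain ⟨_, -, hg, -⟩ := hgap 0
  have : Nontrivial R := nontrivial_of_ne _ _ hg
  obtain ⟨M, hM, hmax⟩ := Set.exists_max_image _ id hfin
    ⟨0, left_ne_zero_of_mul_eq_one hconst⟩
  obtain ⟨n, hn, hgn, hgap⟩ := hgap M
  have hcoeff : (f * g).coeff (n + M) = f.coeff M * g.coeff n := by
    rw [coeff_mul, Finset.sum_eq_single (M, n)]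
    · rintro ⟨i, j⟩ hij hne
      rw [Finset.HasAntidiagonal.mem_antidiagonal] at hij
      dsimp only at hij ⊢
      by_cases hi : f.coeff i = 0
      · rw [hi, zero_mul]
      · have hiM : i < M :=
          (show i ≤ M from hmax i hi).lt_of_ne fun h ↦ hne (by subst h; congr; omega)
        rw [hgap j ⟨by omega, by omega⟩, mul_zero]
    · simp [add_comm]
  rw [hfg, coeff_one, if_neg (by omega)] at hcoeff
  exact mul_ne_zero hM hgn hcoeff.symm

theorem pentagonal_notMem_Ioo (k : ℕ) (j : ℤ) :
    pentagonal j ∉ Set.Ioo (pentagonal (-k)) (pentagonal (k + 1)) := by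
  rintro ⟨hlo, hhi⟩
  zify at hlo hhi
  have hj := two_mul_natCast_pentagonal j
  have hlo' := two_mul_natCast_pentagonal_neg k
  have hhi' := two_mul_natCast_pentagonal (k + 1)
  have hk : (0 : ℤ) ≤ k := by positivity
  rcases le_or_gt ((k : ℤ) + 1) j with h | h
  · nlinarith [mul_nonneg (sub_nonneg.mpr h) (by linarith : (0 : ℤ) ≤ 3 * j + 3 * k + 2)]
  rcases le_or_gt j (-(k + 1)) with h' | h'
  · nlinarith [mul_nonneg (by linarith : (0 : ℤ) ≤ -j - k - 1)
      (by linarith : (0 : ℤ) ≤ -3 * j + 3 * k + 4)]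
  · nlinarith [mul_nonneg (by linarith : (0 : ℤ) ≤ k + j)
      (by linarith : (0 : ℤ) ≤ 3 * k - 3 * j + 1)]

theorem PowerSeries.exists_gap_coeff_pentagonalSeries (R : Type*) [CommRing R] [Nontrivial R]
    (M : ℕ) : ∃ n, 0 < n ∧ (pentagonalSeries R).coeff n ≠ 0 ∧
      ∀ k ∈ Set.Ioc n (n + M), (pentagonalSeries R).coeff k = 0 := by
  have hlo := two_mul_natCast_pentagonal_neg (M + 1 : ℕ)
  have hhi := two_mul_natCast_pentagonal ((M + 1 : ℕ) + 1)
  push_cast at hlo hhi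
  refine ⟨pentagonal (-(M + 1 : ℕ)), by zify; nlinarith,
    (coeff_pentagonalSeries_eq_zero_iff R).not.mpr (by simp), fun k hk ↦ ?_⟩
  refine coeff_pentagonalSeries_eq_zero R fun ⟨j, hj⟩ ↦
    pentagonal_notMem_Ioo (M + 1) j ⟨hj ▸ hk.1, ?_⟩
  have := hk.2
  zify at this ⊢
  linarith

theorem mk_partitionFn_mul_pentagonalSeries (R : Type*) [CommRing R] :
    mk (fun n ↦ (partitionFn n : R)) * pentagonalSeries R = 1 := by
  let _ : TopologicalSpace R := ⊥
  have _ : DiscreteTopology R := ⟨rfl⟩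
  have hprod := (Nat.Partition.hasProd_powerSeriesMk_card_restricted R (fun _ ↦ True)).mul
    (hasProd_one_sub_X_pow R)
  simp only [if_true, pow_mul, tsum_pow_mul_one_sub_of_constantCoeff_eq_zero
    (by simp : constantCoeff (X ^ (_ + 1) : R⟦X⟧) = 0)] at hprod
  convert hprod.unique hasProd_one
  simp [Nat.Partition.restricted, partitionFn]

/-- The special case t = 1 of the odd case of Subbarao's conjecture: the set
of n with p(n) odd is infinite. -/
theorem odd_partition_infinite : {n : ℕ | Odd (partitionFn n)}.Infinite := by
  simpa [ZMod.natCast_ne_zero_iff_odd] using setOf_coeff_ne_zero_infinite_of_mul_eq_one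
    (mk_partitionFn_mul_pentagonalSeries (ZMod 2)) (exists_gap_coeff_pentagonalSeries (ZMod 2))
end

section
/- The set {n ∈ ℕ : p(n) is even} is infinite. -/
/-!
Euler's identity `(∑ p(n) qⁿ) · ∏ (1 - qⁿ) = 1` together with the pentagonal number theorem gives
`∑ₖ p(n - k(3k-1)/2) ≡ 0 (mod 2)` for every `n ≥ 1`. If `p(m)` were odd for all `m > N`, take
`K = N + 1` and `n = pentagonal (-K) + N + 1`. The next pentagonal number is
`pentagonal (K + 1) = pentagonal (-K) + 2K + 1 > n`, so the pentagonal numbers up to `n` are exactly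
the `2K + 1` values `pentagonal k` with `|k| ≤ K`, and for each of them `n - pentagonal k > N`.
The congruence then reads `2K + 1 ≡ 0 (mod 2)`.
-/

open Finset PowerSeries PowerSeries.WithPiTopology

theorem pentagonal_le_pentagonal_neg_iff (K : ℕ) (k : ℤ) :
    pentagonal k ≤ pentagonal (-K) ↔ |k| ≤ K := by
  rw [← Nat.cast_le (α := ℤ), ← mul_le_mul_iff_right₀ (by norm_num : (0 : ℤ) < 2),
    two_mul_natCast_pentagonal, two_mul_natCast_pentagonal_neg, abs_le]
  constructor
  · intro h
    constructor <;> nlinarith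
  · rintro ⟨h₁, h₂⟩
    nlinarith

theorem pentagonal_add_one_le_iff (K : ℕ) (k : ℤ) :
    pentagonal (K + 1) ≤ pentagonal k ↔ K < |k| := by
  rw [← Nat.cast_le (α := ℤ), ← mul_le_mul_iff_right₀ (by norm_num : (0 : ℤ) < 2),
    two_mul_natCast_pentagonal, two_mul_natCast_pentagonal, lt_abs]
  constructor
  · intro h
    by_contra! h'
    nlinarith
  · rintro (h | h) <;> nlinarith

theorem pentagonal_add_one_eq (K : ℕ) :
    pentagonal ((K : ℤ) + 1) = pentagonal (-K) + 2 * K + 1 := by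
  have h₁ := two_mul_natCast_pentagonal ((K : ℤ) + 1)
  have h₂ := two_mul_natCast_pentagonal_neg (K : ℤ)
  zify
  linarith

theorem pentagonal_le_iff_of_mem_Ico {K n : ℕ}
    (hn : n ∈ Ico (pentagonal (-K)) (pentagonal (K + 1))) (k : ℤ) :
    pentagonal k ≤ n ↔ |k| ≤ K := by
  rw [mem_Ico] at hn
  constructor
  · intro hk
    by_contra! hK
    exact absurd ((pentagonal_add_one_le_iff K k).2 hK) (by omega)
  · exact fun hk ↦ ((pentagonal_le_pentagonal_neg_iff K k).2 hk).trans hn.1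

theorem notMem_range_pentagonal_of_mem_Ioo {K n : ℕ}
    (hn : n ∈ Ioo (pentagonal (-K)) (pentagonal (K + 1))) : n ∉ Set.range pentagonal := by
  rintro ⟨k, rfl⟩
  have hk := (pentagonal_le_iff_of_mem_Ico (Ioo_subset_Ico_self hn) k).1 le_rfl
  exact (mem_Ioo.1 hn).1.not_ge ((pentagonal_le_pentagonal_neg_iff K k).2 hk)

theorem card_restricted_true (n : ℕ) :
    (Nat.Partition.restricted n fun _ ↦ True).card = partitionFn n := by
  simp [Nat.Partition.restricted, partitionFn]

theorem powerSeriesMk_partitionFn_mul_pentagonalSeries (R : Type*) [CommRing R] :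
    PowerSeries.mk (fun n ↦ (partitionFn n : R)) * pentagonalSeries R = 1 := by
  let _ : TopologicalSpace R := ⊥
  have _ : DiscreteTopology R := ⟨rfl⟩
  have h := (Nat.Partition.hasProd_powerSeriesMk_card_restricted R (fun _ ↦ True)).mul
    (hasProd_one_sub_X_pow R)
  have hgeom (i : ℕ) :
      (if True then ∑' j : ℕ, (X : R⟦X⟧) ^ ((i + 1) * j) else 1) * (1 - X ^ (i + 1)) = 1 := by
    simp only [if_true, pow_mul]
    exact tsum_pow_mul_one_sub_of_constantCoeff_eq_zero (by simp)
  simp only [hgeom, card_restricted_true] at h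
  exact h.unique hasProd_one

theorem sum_range_coeff_pentagonalSeries_mul_partitionFn (R : Type*) [CommRing R] {n : ℕ}
    (hn : n ≠ 0) :
    ∑ j ∈ range (n + 1), (pentagonalSeries R).coeff j * partitionFn (n - j) = 0 := by
  have h := congrArg (coeff n) (powerSeriesMk_partitionFn_mul_pentagonalSeries R)
  rw [mul_comm, coeff_mul, Nat.sum_antidiagonal_eq_sum_range_succ
    (fun i j ↦ (pentagonalSeries R).coeff i * (mk fun n ↦ (partitionFn n : R)).coeff j),
    coeff_one, if_neg hn] at h
  simpa only [coeff_mk] using h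

theorem intCast_negOnePow_zmod_two (k : ℤ) : ((k.negOnePow : ℤ) : ZMod 2) = 1 := by
  rcases Int.isUnit_iff.mp k.negOnePow.isUnit with h | h <;> simp [h]

theorem sum_range_coeff_pentagonalSeries_zmod_two {K n : ℕ}
    (hn : n ∈ Ico (pentagonal (-K)) (pentagonal (K + 1))) :
    ∑ j ∈ range (n + 1), (pentagonalSeries (ZMod 2)).coeff j = 1 := by
  have hsub : (Icc (-K : ℤ) K).image pentagonal ⊆ range (n + 1) := by
    intro j hj
    obtain ⟨k, hk, rfl⟩ := mem_image.1 hj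
    exact mem_range_succ_iff.2 ((pentagonal_le_iff_of_mem_Ico hn k).2 (abs_le.2 (mem_Icc.1 hk)))
  rw [← sum_subset hsub, sum_image pentagonal_injective.injOn]
  · simp only [coeff_pentagonalSeries_pentagonal, intCast_negOnePow_zmod_two, sum_const,
      Int.card_Icc, nsmul_eq_mul, mul_one]
    rw [show ((K : ℤ) + 1 - -K).toNat = 2 * K + 1 by omega]
    exact ZMod.natCast_eq_one_iff_odd.2 (odd_two_mul_add_one K)
  · intro j hj hj'
    apply coeff_pentagonalSeries_eq_zero
    rintro ⟨k, rfl⟩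
    refine hj' (mem_image_of_mem _ (mem_Icc.2 (abs_le.1 ?_)))
    exact (pentagonal_le_iff_of_mem_Ico hn k).1 (mem_range_succ_iff.1 hj)

theorem exists_even_partitionFn_gt (N : ℕ) : ∃ m, Even (partitionFn m) ∧ N < m := by
  by_contra! h
  have hodd (m : ℕ) (hm : N < m) : (partitionFn m : ZMod 2) = 1 :=
    ZMod.natCast_eq_one_iff_odd.2 (Nat.not_even_iff_odd.1 fun he ↦ (h m he).not_gt hm)
  set x := pentagonal (-(N + 1 : ℕ))
  have hwindow : x + N + 1 ∈ Ico x (pentagonal ((N + 1 : ℕ) + 1)) := by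
    rw [mem_Ico, pentagonal_add_one_eq]
    omega
  have hterm : ∀ j ∈ range (x + N + 1 + 1), (pentagonalSeries (ZMod 2)).coeff j *
      partitionFn (x + N + 1 - j) = (pentagonalSeries (ZMod 2)).coeff j := by
    intro j hj
    rcases le_or_gt j x with hjx | hjx
    · rw [hodd _ (by omega), mul_one]
    · rw [coeff_pentagonalSeries_eq_zero _ (notMem_range_pentagonal_of_mem_Ioo
        (mem_Ioo.2 ⟨hjx, ?_⟩)), zero_mul]
      exact (mem_range_succ_iff.1 hj).trans_lt (mem_Ico.1 hwindow).2
  have hsum := sum_range_coeff_pentagonalSeries_mul_partitionFn (ZMod 2) (n := x + N + 1)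
    (by omega)
  rw [sum_congr rfl hterm, sum_range_coeff_pentagonalSeries_zmod_two hwindow] at hsum
  exact one_ne_zero hsum

/-- The set of n with p(n) even is infinite. -/
theorem even_partition_infinite : {n : ℕ | Even (partitionFn n)}.Infinite :=
  Set.infinite_of_forall_exists_gt exists_even_partitionFn_gt
end
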